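/- arXiv:math/0311505 — 3 statements merged into one kernel-verified Lean document; each statement's English description precedes it below -/
import Mathlib

section
/- For every integer n ≥ 2, B(n) - β(n) ≤ 2·√n. -/
/-!
Write `n = ∏ p ^ αₚ` and `xₚ = √(p ^ αₚ)`, so that `∏ xₚ = √n`. Each term of
`B(n) - β(n) = ∑ (αₚ - 1) p` is at most `2 xₚ`, because
`(α - 1)² ≤ 2 ^ α ≤ 4 p ^ (α - 2)`.
Only primes with `αₚ ≥ 2` contribute, and for them `xₚ ≥ 2`; numbers that are at least `2`
have sum at most their product, and the remaining factors `xₚ ≥ 1` only enlarge the product.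
-/

open Finset

def beta (n : ℕ) : ℕ := ∑ p ∈ n.primeFactors, p
def Bfun (n : ℕ) : ℕ := ∑ p ∈ n.primeFactors, n.factorization p * p
def B1fun (n : ℕ) : ℕ := ∑ p ∈ n.primeFactors, p ^ n.factorization p
def Pfun (n : ℕ) : ℕ := max 1 (n.primeFactors.sup id)
def Omegafun (n : ℕ) : ℕ := ∑ p ∈ n.primeFactors, n.factorization p
def omegafun (n : ℕ) : ℕ := n.primeFactors.card
def Squarefull (s : ℕ) : Prop := 0 < s ∧ ∀ p : ℕ, p.Prime → p ∣ s → p ^ 2 ∣ s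

lemma Nat.sq_le_two_pow_succ : ∀ j : ℕ, j ^ 2 ≤ 2 ^ (j + 1)
  | 0 | 1 | 2 | 3 => by norm_num
  | j + 4 => calc
      (j + 4) ^ 2 ≤ 2 * (j + 3) ^ 2 := by ring_nf; omega
      _ ≤ 2 * 2 ^ (j + 3 + 1) := Nat.mul_le_mul_left 2 (Nat.sq_le_two_pow_succ (j + 3))
      _ = 2 ^ (j + 4 + 1) := by ring

lemma Nat.sub_one_mul_sq_le {p : ℕ} (hp : 2 ≤ p) : ∀ k : ℕ, ((k - 1) * p) ^ 2 ≤ 4 * p ^ k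
  | 0 | 1 => by simp
  | i + 2 => calc
      ((i + 2 - 1) * p) ^ 2 = (i + 1) ^ 2 * p ^ 2 := by
        rw [show i + 2 - 1 = i + 1 by omega, mul_pow]
      _ ≤ 2 ^ (i + 2) * p ^ 2 := Nat.mul_le_mul_right _ (Nat.sq_le_two_pow_succ (i + 1))
      _ = 4 * 2 ^ i * p ^ 2 := by ring
      _ ≤ 4 * p ^ i * p ^ 2 := by gcongr
      _ = 4 * p ^ (i + 2) := by ring

lemma sub_one_mul_le_two_mul_sqrt_pow {p : ℕ} (hp : 2 ≤ p) (k : ℕ) :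
    (((k - 1) * p : ℕ) : ℝ) ≤ 2 * √((p : ℝ) ^ k) := by
  rw [show (2 : ℝ) * √((p : ℝ) ^ k) = √(4 * (p : ℝ) ^ k) by
    rw [Real.sqrt_mul' _ (by positivity), show (4 : ℝ) = 2 ^ 2 by norm_num,
      Real.sqrt_sq zero_le_two], Real.le_sqrt (by positivity) (by positivity)]
  exact_mod_cast Nat.sub_one_mul_sq_le hp k

section
variable {ι R : Type*} [CommSemiring R] [LinearOrder R] [IsStrictOrderedRing R]

theorem Finset.sum_le_prod_of_two_le {s : Finset ι} {f : ι → R} (hf : ∀ i ∈ s, 2 ≤ f i) :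
    ∑ i ∈ s, f i ≤ ∏ i ∈ s, f i := by
  rcases s.eq_empty_or_nonempty with rfl | hs
  · simp
  induction hs using Finset.Nonempty.cons_induction with
  | singleton a => simp
  | cons a s ha hs ih =>
    rw [sum_cons, prod_cons]
    have hs2 : ∀ i ∈ s, 2 ≤ f i := fun i hi => hf i (mem_cons_of_mem hi)
    have hsum := ih hs2
    obtain ⟨b, hb⟩ := hs
    have hprod : 2 ≤ ∏ i ∈ s, f i := (hs2 b hb).trans <|
      (single_le_sum (fun i hi => zero_le_two.trans (hs2 i hi)) hb).trans hsum
    calc f a + ∑ i ∈ s, f i ≤ f a + ∏ i ∈ s, f i := by gcongr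
      _ ≤ f a * ∏ i ∈ s, f i := add_le_mul (hf a (mem_cons_self a s)) hprod

theorem Finset.sum_le_prod_of_le {s : Finset ι} {a b : ι → R} (hab : ∀ i ∈ s, a i ≤ b i)
    (hb1 : ∀ i ∈ s, 1 ≤ b i) (hb2 : ∀ i ∈ s, a i ≠ 0 → 2 ≤ b i) :
    ∑ i ∈ s, a i ≤ ∏ i ∈ s, b i := by
  classical
  set t := s.filter (a · ≠ 0)
  have hts : t ⊆ s := filter_subset _ s
  calc ∑ i ∈ s, a i = ∑ i ∈ t, a i := (sum_filter_ne_zero s).symm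
    _ ≤ ∑ i ∈ t, b i := sum_le_sum fun i hi => hab i (hts hi)
    _ ≤ ∏ i ∈ t, b i := sum_le_prod_of_two_le fun i hi => hb2 i (hts hi) (mem_filter.1 hi).2
    _ ≤ ∏ i ∈ s, b i := prod_le_prod_of_subset_of_one_le hts
        (fun i hi => zero_le_one.trans (hb1 i (hts hi))) fun i hi _ => hb1 i hi
end

lemma Bfun_sub_beta (n : ℕ) :
    Bfun n - beta n = ∑ p ∈ n.primeFactors, (n.factorization p - 1) * p := by
  simp only [Bfun, beta, Nat.sub_one_mul]
  refine (sum_tsub_distrib _ fun p hp => ?_).symm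
  exact Nat.le_mul_of_pos_left p (Nat.pos_of_ne_zero (Finsupp.mem_support_iff.1 hp))

lemma Real.sqrt_eq_prod_primeFactors {n : ℕ} (hn : n ≠ 0) :
    √(n : ℝ) = ∏ p ∈ n.primeFactors, √((p : ℝ) ^ n.factorization p) := by
  rw [← Real.sqrt_prod _ fun p _ => by positivity]
  exact_mod_cast congrArg (fun m : ℕ => √(m : ℝ)) (Nat.prod_factorization_pow_eq_self hn).symm

theorem stmt1_general (n : ℕ) :
    ((Bfun n - beta n : ℕ) : ℝ) ≤ 2 * Real.sqrt n := by
  obtain rfl | hn0 := eq_or_ne n 0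
  · simp [Bfun, beta]
  have hp2 : ∀ p ∈ n.primeFactors, 2 ≤ p :=
    fun p hp => (Nat.prime_of_mem_primeFactors hp).two_le
  suffices ∑ p ∈ n.primeFactors, (((n.factorization p - 1) * p : ℕ) : ℝ) / 2 ≤
      ∏ p ∈ n.primeFactors, √((p : ℝ) ^ n.factorization p) by
    rw [Bfun_sub_beta, Real.sqrt_eq_prod_primeFactors hn0]
    push_cast [← sum_div] at this ⊢
    linarith
  refine sum_le_prod_of_le (fun p hp => ?_) (fun p hp => ?_) fun p hp hne => ?_
  · linarith [sub_one_mul_le_two_mul_sqrt_pow (hp2 p hp) (n.factorization p)]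
  · exact Real.one_le_sqrt.2 (one_le_pow₀ (by exact_mod_cast (hp2 p hp).trans' one_le_two))
  · have h2 : 2 ≤ n.factorization p := by
      by_contra! h
      simp [Nat.sub_eq_zero_of_le (Nat.le_of_lt_succ h)] at hne
    rw [Real.le_sqrt zero_le_two (by positivity)]
    exact_mod_cast (Nat.pow_le_pow_left (hp2 p hp) 2).trans
      (Nat.pow_le_pow_right (zero_lt_two.trans_le (hp2 p hp)) h2)

theorem stmt1 (n : ℕ) (hn : 2 ≤ n) :
    ((Bfun n - beta n : ℕ) : ℝ) ≤ 2 * Real.sqrt n :=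
  stmt1_general n
end

section
/- For all x ≥ 1, |∑_{n ≤ x} B₁(n) - ∑_{n ≤ x} β(n)| ≤ C·x^{3/2} for some absolute constant C. -/
/-! A prime power `p ^ a ∥ n` with `a ≥ 2` contributes `p ^ a - p ≤ p ^ a` to `B₁(n) - β(n)`, and
`p ^ a` is a proper prime power dividing `n`. Summing over `n ≤ N`, each proper prime power
`q ≤ N` contributes at most `q ⌊N / q⌋ ≤ N`, and there are at most `2 √N` of them, since each is
`m ^ 2` or `m ^ 2 p` with `m ≤ √N`. -/

open Finset

open scoped Classical in
noncomputable def properPrimePowers (N : ℕ) : Finset ℕ :=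
  {q ∈ Icc 1 N | ∃ p k : ℕ, p.Prime ∧ 2 ≤ k ∧ q = p ^ k}

lemma mem_properPrimePowers {N q : ℕ} :
    q ∈ properPrimePowers N ↔ q ∈ Icc 1 N ∧ ∃ p k : ℕ, p.Prime ∧ 2 ≤ k ∧ q = p ^ k := by
  classical
  rw [properPrimePowers, mem_filter]

lemma card_properPrimePowers_le (N : ℕ) : #(properPrimePowers N) ≤ 2 * N.sqrt := by
  have hsub : properPrimePowers N ⊆
      (Icc 1 N.sqrt ×ˢ range 2).image (fun mr => mr.1 ^ 2 * mr.1.minFac ^ mr.2) := by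
    intro q hq
    obtain ⟨hqN, p, k, hp, hk, rfl⟩ := mem_properPrimePowers.mp hq
    refine mem_image.mpr ⟨(p ^ (k / 2), k % 2), mem_product.mpr ⟨mem_Icc.mpr ⟨?_, ?_⟩, ?_⟩, ?_⟩
    · exact Nat.one_le_pow _ _ hp.pos
    · rw [Nat.le_sqrt', ← pow_mul]
      exact (Nat.pow_le_pow_right hp.pos (by omega)).trans (mem_Icc.mp hqN).2
    · exact mem_range.mpr (Nat.mod_lt _ two_pos)
    · dsimp only
      rw [hp.pow_minFac (by omega), ← pow_mul, ← pow_add, mul_comm, Nat.div_add_mod]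
  calc #(properPrimePowers N) ≤ #((Icc 1 N.sqrt ×ˢ range 2).image _) := card_le_card hsub
    _ ≤ #(Icc 1 N.sqrt ×ˢ range 2) := card_image_le
    _ = 2 * N.sqrt := by rw [card_product, Nat.card_Icc, card_range]; omega

lemma beta_le_B1fun (n : ℕ) : beta n ≤ B1fun n :=
  sum_le_sum fun p hp => Nat.le_self_pow
    (Finsupp.mem_support_iff.mp (n.support_factorization ▸ hp)) p

lemma ordProj_mem_properPrimePowers {N n p : ℕ} (hn : n ∈ Icc 1 N) (hp : p.Prime)
    (h2 : 2 ≤ n.factorization p) : p ^ n.factorization p ∈ properPrimePowers N := by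
  have hle : p ^ n.factorization p ≤ n := Nat.le_of_dvd (mem_Icc.mp hn).1 (Nat.ordProj_dvd n p)
  exact mem_properPrimePowers.mpr
    ⟨mem_Icc.mpr ⟨Nat.one_le_pow _ _ hp.pos, hle.trans (mem_Icc.mp hn).2⟩, p, _, hp, h2, rfl⟩

lemma B1fun_le_beta_add_sum_properPrimePowers {N n : ℕ} (hn : n ∈ Icc 1 N) :
    B1fun n ≤ beta n + ∑ q ∈ properPrimePowers N with q ∣ n, q := by
  have hexp : ∀ p ∈ n.primeFactors, n.factorization p ≠ 0 := fun p hp =>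
    Finsupp.mem_support_iff.mp (n.support_factorization ▸ hp)
  have hsplit : ∀ p ∈ n.primeFactors,
      p ^ n.factorization p ≤ p + if 2 ≤ n.factorization p then p ^ n.factorization p else 0 := by
    intro p hp
    split_ifs with h
    · exact Nat.le_add_left _ _
    · rw [show n.factorization p = 1 by have := hexp p hp; omega, pow_one, add_zero]
  have hinj : Set.InjOn (fun p => p ^ n.factorization p)
      ({p ∈ n.primeFactors | 2 ≤ n.factorization p} : Finset ℕ) := by
    intro p hp p' hp' h
    rw [mem_coe, mem_filter, Nat.mem_primeFactors] at hp hp'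
    exact (hp.1.1.pow_inj' hp'.1.1 (by omega) (by omega) h).1
  have hsub : {p ∈ n.primeFactors | 2 ≤ n.factorization p}.image (fun p => p ^ n.factorization p)
      ⊆ {q ∈ properPrimePowers N | q ∣ n} := by
    intro q hq
    obtain ⟨p, hp, rfl⟩ := mem_image.mp hq
    obtain ⟨hpn, h2⟩ := mem_filter.mp hp
    exact mem_filter.mpr ⟨ordProj_mem_properPrimePowers hn (Nat.prime_of_mem_primeFactors hpn) h2,
      Nat.ordProj_dvd n p⟩
  calc B1fun n
      ≤ ∑ p ∈ n.primeFactors,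
          (p + if 2 ≤ n.factorization p then p ^ n.factorization p else 0) := sum_le_sum hsplit
    _ = beta n + ∑ q ∈ {p ∈ n.primeFactors | 2 ≤ n.factorization p}.image
          (fun p => p ^ n.factorization p), q := by
      rw [sum_add_distrib, ← sum_filter, sum_image hinj, beta]
    _ ≤ beta n + ∑ q ∈ properPrimePowers N with q ∣ n, q :=
      Nat.add_le_add_left (sum_le_sum_of_subset hsub) _

lemma sum_filter_dvd_Icc_le (N q : ℕ) : ∑ _n ∈ Icc 1 N with q ∣ _n, q ≤ N := by
  rw [sum_const, smul_eq_mul, show Icc 1 N = Ioc 0 N from rfl, Nat.Ioc_filter_dvd_card_eq_div]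
  exact Nat.div_mul_le_self N q

lemma sum_B1fun_le (N : ℕ) :
    ∑ n ∈ Icc 1 N, B1fun n ≤ ∑ n ∈ Icc 1 N, beta n + 2 * N.sqrt * N := by
  calc ∑ n ∈ Icc 1 N, B1fun n
      ≤ ∑ n ∈ Icc 1 N, (beta n + ∑ q ∈ properPrimePowers N with q ∣ n, q) :=
        sum_le_sum fun n hn => B1fun_le_beta_add_sum_properPrimePowers hn
    _ = ∑ n ∈ Icc 1 N, beta n + ∑ q ∈ properPrimePowers N, ∑ n ∈ Icc 1 N with q ∣ n, q := by
        simp only [sum_add_distrib, sum_filter]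
        rw [sum_comm]
    _ ≤ ∑ n ∈ Icc 1 N, beta n + #(properPrimePowers N) * N := by
        gcongr
        calc ∑ q ∈ properPrimePowers N, ∑ n ∈ Icc 1 N with q ∣ n, q
            ≤ ∑ _q ∈ properPrimePowers N, N := sum_le_sum fun q _ => sum_filter_dvd_Icc_le N q
          _ = #(properPrimePowers N) * N := by rw [sum_const, smul_eq_mul]
    _ ≤ ∑ n ∈ Icc 1 N, beta n + 2 * N.sqrt * N := by
        gcongr
        exact card_properPrimePowers_le N

lemma natSqrt_mul_le_rpow_three_halves {N : ℕ} {x : ℝ} (hN : (N : ℝ) ≤ x) :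
    (N.sqrt : ℝ) * N ≤ x ^ ((3 : ℝ) / 2) := by
  have hx : 0 ≤ x := (Nat.cast_nonneg N).trans hN
  have hsqrt : (N.sqrt : ℝ) ≤ √x := Real.nat_sqrt_le_real_sqrt.trans (Real.sqrt_le_sqrt hN)
  calc (N.sqrt : ℝ) * N ≤ √x * x := by gcongr
    _ = x ^ ((3 : ℝ) / 2) := by
      rw [Real.sqrt_eq_rpow, show (3 : ℝ) / 2 = 1 / 2 + 1 by norm_num,
        Real.rpow_add' hx (by norm_num), Real.rpow_one]

theorem stmt6 : ∃ C : ℝ, ∀ x : ℝ, 1 ≤ x →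
    |(∑ n ∈ Finset.Icc 1 ⌊x⌋₊, (B1fun n : ℝ)) - ∑ n ∈ Finset.Icc 1 ⌊x⌋₊, (beta n : ℝ)|
      ≤ C * x ^ ((3 : ℝ) / 2) := by
  refine ⟨2, fun x hx => ?_⟩
  set N := ⌊x⌋₊
  have hlower : ∑ n ∈ Icc 1 N, (beta n : ℝ) ≤ ∑ n ∈ Icc 1 N, (B1fun n : ℝ) :=
    sum_le_sum fun n _ => Nat.cast_le.mpr (beta_le_B1fun n)
  have hupper : ∑ n ∈ Icc 1 N, (B1fun n : ℝ) ≤ ∑ n ∈ Icc 1 N, (beta n : ℝ) + 2 * N.sqrt * N := by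
    exact_mod_cast sum_B1fun_le N
  have hgrowth := natSqrt_mul_le_rpow_three_halves (Nat.floor_le (zero_le_one.trans hx))
  rw [abs_of_nonneg (sub_nonneg.mpr hlower)]
  linarith
end

section
/- For every k ≥ 1, the sum ∑ 1/s over squarefull integers s with B(s) - β(s) ≥ k is O(1/k); i.e., there is an absolute constant C with ∑_{s squarefull, B(s)-β(s) ≥ k} 1/s ≤ C/k. -/
open Finset

/-!
For squarefull `s`, `B(s) - β(s) = ∑ (e_p - 1) p` with every `e_p ≥ 2`; termwise
`(e_p - 1) p ≤ (3/2) p^{e_p/2}`, and a sum of numbers `≥ 2` is at most `4/3` of their product, so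
`B(s) - β(s) ≤ 2 √s`. Hence `B(s) - β(s) ≥ k` forces `s ≥ k²/4`. Every squarefull `s` is `a² b³`,
so the reciprocals of squarefull `s ≥ T` sum to at most `∑_b b⁻³ ∑_{a ≥ √T / b^{3/2}} a⁻² ≪ 1/√T`,
which for `T = k²/4` is `≪ 1/k`.
-/

lemma Squarefull.two_le_factorization {s p : ℕ} (hs : Squarefull s) (hp : p ∈ s.primeFactors) :
    2 ≤ s.factorization p :=
  (Nat.prime_of_mem_primeFactors hp).pow_dvd_iff_le_factorization hs.1.ne' |>.1 <|
    hs.2 p (Nat.prime_of_mem_primeFactors hp) (Nat.dvd_of_mem_primeFactors hp)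

/-- Write `s = m² r` with `r` squarefree; each prime of `r` must then divide `m`, so `r ∣ m`. -/
lemma Squarefull.exists_eq_sq_mul_cube {s : ℕ} (hs : Squarefull s) :
    ∃ a b : ℕ, s = a ^ 2 * b ^ 3 := by
  obtain ⟨r, m, rfl, hr⟩ := Nat.sq_mul_squarefree s
  suffices r ∣ m by
    obtain ⟨c, rfl⟩ := this
    exact ⟨c, r, by ring⟩
  rw [← Nat.prod_primeFactors_of_squarefree hr]
  refine Finset.prod_primes_dvd m (fun p hp => (Nat.prime_of_mem_primeFactors hp).prime)
    fun p hp => ?_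
  have hpp := Nat.prime_of_mem_primeFactors hp
  by_contra hpm
  have hp2 : p ^ 2 ∣ r :=
    (Nat.Coprime.pow 2 2 ((Nat.Prime.coprime_iff_not_dvd hpp).2 hpm)).dvd_of_dvd_mul_left
      (hs.2 p hpp (dvd_mul_of_dvd_right (Nat.dvd_of_mem_primeFactors hp) _))
  exact hpp.one_lt.ne' (Nat.isUnit_iff.1 (hr p (by simpa [sq] using hp2)))

lemma four_mul_sq_le_nine_mul_two_pow (m : ℕ) : 4 * (m + 1) ^ 2 ≤ 9 * 2 ^ m := by
  induction m with
  | zero => norm_num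
  | succ m ih =>
    rcases Nat.lt_or_ge m 2 with hm | hm
    · interval_cases m <;> norm_num
    · rw [pow_succ 2 m]
      nlinarith

lemma four_mul_sq_le_nine_mul_pow {p e : ℕ} (hp : 2 ≤ p) (he : 2 ≤ e) :
    4 * ((e - 1) * p) ^ 2 ≤ 9 * p ^ e := by
  obtain ⟨m, rfl⟩ : ∃ m, e = m + 2 := ⟨e - 2, by omega⟩
  calc 4 * ((m + 2 - 1) * p) ^ 2 = 4 * (m + 1) ^ 2 * p ^ 2 := by
        rw [Nat.add_sub_assoc one_le_two]; ring
    _ ≤ 9 * 2 ^ m * p ^ 2 := Nat.mul_le_mul_right _ (four_mul_sq_le_nine_mul_two_pow m)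
    _ ≤ 9 * p ^ m * p ^ 2 := by gcongr
    _ = 9 * p ^ (m + 2) := by ring

lemma two_le_sqrt_pow {p e : ℕ} (hp : 2 ≤ p) (he : 2 ≤ e) : 2 ≤ √((p : ℝ) ^ e) := by
  rw [Real.le_sqrt zero_le_two (by positivity)]
  calc (2 : ℝ) ^ 2 ≤ (p : ℝ) ^ 2 := by gcongr; exact_mod_cast hp
    _ ≤ (p : ℝ) ^ e := pow_le_pow_right₀ (by norm_cast; omega) he

lemma two_mul_sub_one_mul_le_three_mul_sqrt_pow {p e : ℕ} (hp : 2 ≤ p) (he : 2 ≤ e) :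
    2 * (((e - 1) * p : ℕ) : ℝ) ≤ 3 * √((p : ℝ) ^ e) := by
  have h9 : (3 : ℝ) * √((p : ℝ) ^ e) = √(9 * (p : ℝ) ^ e) := by
    rw [Real.sqrt_mul' _ (by positivity), show (9 : ℝ) = 3 ^ 2 by norm_num,
      Real.sqrt_sq zero_le_three]
  rw [h9, Real.le_sqrt (by positivity) (by positivity)]
  exact_mod_cast (show (2 * ((e - 1) * p)) ^ 2 ≤ 9 * p ^ e by
    have := four_mul_sq_le_nine_mul_pow hp he; ring_nf at this ⊢; omega)

lemma three_mul_sum_le_four_mul_prod {ι : Type*} (s : Finset ι) {f : ι → ℝ}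
    (hf : ∀ i ∈ s, 2 ≤ f i) : 3 * ∑ i ∈ s, f i ≤ 4 * ∏ i ∈ s, f i := by
  induction s using Finset.cons_induction with
  | empty => simp
  | cons a s ha ih =>
    rw [Finset.sum_cons, Finset.prod_cons]
    have hfa := hf a (Finset.mem_cons_self a s)
    have hfs i (hi : i ∈ s) := hf i (Finset.mem_cons_of_mem hi)
    rcases s.eq_empty_or_nonempty with rfl | hne
    · simp only [Finset.sum_empty, Finset.prod_empty]
      linarith
    · have hprod : 2 ≤ ∏ i ∈ s, f i := calc
        (2 : ℝ) ≤ 2 ^ s.card := le_self_pow₀ one_le_two (Finset.card_pos.2 hne).ne'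
        _ = ∏ _i ∈ s, 2 := (Finset.prod_const 2).symm
        _ ≤ ∏ i ∈ s, f i := Finset.prod_le_prod (fun _ _ => zero_le_two) hfs
      nlinarith [ih hfs]

theorem Squarefull.sq_le_four_mul {s k : ℕ} (hs : Squarefull s) (hk : k ≤ Bfun s - beta s) :
    k ^ 2 ≤ 4 * s := by
  set t : ℕ → ℝ := fun p => √((p : ℝ) ^ s.factorization p)
  have hprod : ∏ p ∈ s.primeFactors, t p = √s := by
    rw [← Real.sqrt_prod _ fun _ _ => by positivity]
    congr 1
    exact_mod_cast (Nat.prod_primeFactors_pow_factorization hs.1.ne').symm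
  have hp p (hp : p ∈ s.primeFactors) := (Nat.prime_of_mem_primeFactors hp).two_le
  have hk2 : 2 * (k : ℝ) ≤ 4 * √s := calc
    2 * (k : ℝ) ≤ ∑ p ∈ s.primeFactors, 2 * (((s.factorization p - 1) * p : ℕ) : ℝ) := by
      rw [← Finset.mul_sum, ← Nat.cast_sum, ← Bfun_sub_beta]; gcongr
    _ ≤ 3 * ∑ p ∈ s.primeFactors, t p := by
      rw [Finset.mul_sum]
      exact Finset.sum_le_sum fun p hps =>
        two_mul_sub_one_mul_le_three_mul_sqrt_pow (hp p hps) (hs.two_le_factorization hps)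
    _ ≤ 4 * √s := hprod ▸ three_mul_sum_le_four_mul_prod _ fun p hps =>
        two_le_sqrt_pow (hp p hps) (hs.two_le_factorization hps)
  have hks : (k : ℝ) ^ 2 ≤ 4 * s := by
    nlinarith [Real.sq_sqrt (Nat.cast_nonneg (α := ℝ) s), Real.sqrt_nonneg (s : ℝ)]
  exact_mod_cast hks

lemma sum_inv_sq_le_two_div {A : ℝ} (hA : 0 < A) (u : Finset ℕ) (hu : ∀ a ∈ u, A ≤ a) :
    ∑ a ∈ u, ((a : ℝ) ^ 2)⁻¹ ≤ 2 / A := by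
  have hm : 1 ≤ ⌈A⌉₊ := Nat.one_le_iff_ne_zero.2 (Nat.ceil_pos.2 hA).ne'
  have hsub : u ⊆ Finset.Ioo (⌈A⌉₊ - 1) (u.sup id + 1) := fun a ha => by
    have h1 : ⌈A⌉₊ ≤ a := Nat.ceil_le.2 (hu a ha)
    have h2 : a ≤ u.sup id := Finset.le_sup (f := id) ha
    rw [Finset.mem_Ioo]; omega
  calc ∑ a ∈ u, ((a : ℝ) ^ 2)⁻¹ ≤ ∑ a ∈ Finset.Ioo (⌈A⌉₊ - 1) (u.sup id + 1), ((a : ℝ) ^ 2)⁻¹ :=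
        Finset.sum_le_sum_of_subset_of_nonneg hsub fun _ _ _ => by positivity
    _ ≤ 2 / ((⌈A⌉₊ - 1 : ℕ) + 1) := sum_Ioo_inv_sq_le _ _
    _ = 2 / ⌈A⌉₊ := by rw [Nat.cast_sub hm, Nat.cast_one, sub_add_cancel]
    _ ≤ 2 / A := div_le_div_of_nonneg_left zero_le_two hA (Nat.le_ceil A)

lemma summable_inv_sqrt_cube : Summable fun b : ℕ => (√((b : ℝ) ^ 3))⁻¹ := by
  refine (Real.summable_nat_rpow_inv.2 (by norm_num : (1 : ℝ) < 3 / 2)).congr fun b => ?_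
  rw [Real.sqrt_eq_rpow, ← Real.rpow_natCast, ← Real.rpow_mul (Nat.cast_nonneg b)]
  norm_num

lemma sum_inv_le_of_forall_eq_sq_mul_sq {T c : ℝ} (hT : 0 < T) (hc : 0 < c) {u : Finset ℕ}
    {a : ℕ → ℕ} (hu : ∀ s ∈ u, (s : ℝ) = (a s : ℝ) ^ 2 * c ^ 2 ∧ T ≤ s) :
    ∑ s ∈ u, (s : ℝ)⁻¹ ≤ 2 / √T * c⁻¹ := by
  have hinj : Set.InjOn a u := fun s hs s' hs' h => by
    have hss' := (hu s hs).1
    rw [h, ← (hu s' hs').1] at hss'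
    exact_mod_cast hss'
  have htail : ∀ α ∈ u.image a, √T / c ≤ α := by
    simp only [Finset.mem_image]
    rintro _ ⟨s, hs, rfl⟩
    rw [div_le_iff₀ hc, ← Real.sqrt_sq hc.le, ← Real.sqrt_sq (Nat.cast_nonneg (a s)),
      ← Real.sqrt_mul (by positivity), ← (hu s hs).1]
    exact Real.sqrt_le_sqrt (hu s hs).2
  calc ∑ s ∈ u, (s : ℝ)⁻¹ = (c ^ 2)⁻¹ * ∑ α ∈ u.image a, ((α : ℝ) ^ 2)⁻¹ := by
        rw [Finset.sum_image hinj, Finset.mul_sum]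
        refine Finset.sum_congr rfl fun s hs => ?_
        rw [(hu s hs).1, mul_inv, mul_comm]
    _ ≤ (c ^ 2)⁻¹ * (2 / (√T / c)) := by
        gcongr
        exact sum_inv_sq_le_two_div (by positivity) _ htail
    _ = 2 / √T * c⁻¹ := by field_simp

theorem exists_sum_inv_squarefull_le_div_sqrt : ∃ C : ℝ, ∀ T : ℝ, 0 < T → ∀ u : Finset ℕ,
    (∀ s ∈ u, Squarefull s ∧ T ≤ s) → ∑ s ∈ u, (s : ℝ)⁻¹ ≤ C / √T := by
  refine ⟨2 * ∑' b : ℕ, (√((b : ℝ) ^ 3))⁻¹, fun T hT u hu => ?_⟩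
  choose! a b hab using fun s (hs : s ∈ u) => (hu s hs).1.exists_eq_sq_mul_cube
  have hfiber : ∀ β ∈ u.image b,
      ∑ s ∈ u with b s = β, (s : ℝ)⁻¹ ≤ 2 / √T * (√((β : ℝ) ^ 3))⁻¹ := by
    intro β hβ
    obtain ⟨s₀, hs₀, rfl⟩ := Finset.mem_image.1 hβ
    have hb : b s₀ ≠ 0 := by
      rintro h
      have hpos := (hu s₀ hs₀).1.1
      rw [hab s₀ hs₀, h] at hpos
      simp at hpos
    refine sum_inv_le_of_forall_eq_sq_mul_sq (a := a) hT (Real.sqrt_pos.2 (by positivity))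
      fun s hs => ?_
    rw [Finset.mem_filter] at hs
    refine ⟨?_, (hu s hs.1).2⟩
    have hs' := hab s hs.1
    rw [hs.2] at hs'
    rw [Real.sq_sqrt (by positivity)]
    exact_mod_cast hs'
  calc ∑ s ∈ u, (s : ℝ)⁻¹ = ∑ β ∈ u.image b, ∑ s ∈ u with b s = β, (s : ℝ)⁻¹ :=
        (Finset.sum_fiberwise_of_maps_to (fun s hs => Finset.mem_image_of_mem b hs) _).symm
    _ ≤ ∑ β ∈ u.image b, 2 / √T * (√((β : ℝ) ^ 3))⁻¹ := Finset.sum_le_sum hfiber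
    _ ≤ 2 / √T * ∑' β : ℕ, (√((β : ℝ) ^ 3))⁻¹ := by
      rw [← Finset.mul_sum]
      gcongr
      exact summable_inv_sqrt_cube.sum_le_tsum _ fun _ _ => by positivity
    _ = 2 * (∑' b : ℕ, (√((b : ℝ) ^ 3))⁻¹) / √T := by ring

theorem stmt12 : ∃ C : ℝ, ∀ k : ℕ, 1 ≤ k →
    ∑' s : {s : ℕ // Squarefull s ∧ k ≤ Bfun s - beta s}, (1 : ℝ) / (s : ℕ) ≤ C / k := by
  obtain ⟨C, hC⟩ := exists_sum_inv_squarefull_le_div_sqrt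
  refine ⟨2 * C, fun k hk => Real.tsum_le_of_sum_le (fun _ => by positivity) fun u => ?_⟩
  have hk0 : (0 : ℝ) < k := by exact_mod_cast hk
  have hsqrt : √((k : ℝ) ^ 2 / 4) = k / 2 := by
    rw [Real.sqrt_div' _ (by norm_num), Real.sqrt_sq hk0.le, show (4 : ℝ) = 2 ^ 2 by norm_num,
      Real.sqrt_sq zero_le_two]
  have hu : ∀ s ∈ u.map (Function.Embedding.subtype _), Squarefull s ∧ (k : ℝ) ^ 2 / 4 ≤ s := by
    simp only [Finset.mem_map, Function.Embedding.coe_subtype]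
    rintro _ ⟨⟨s, hs, hks⟩, -, rfl⟩
    refine ⟨hs, ?_⟩
    rw [div_le_iff₀ zero_lt_four, mul_comm]
    exact_mod_cast hs.sq_le_four_mul hks
  calc ∑ s ∈ u, (1 : ℝ) / (s : ℕ) = ∑ s ∈ u.map (Function.Embedding.subtype _), (s : ℝ)⁻¹ := by
        simp [one_div]
    _ ≤ C / √((k : ℝ) ^ 2 / 4) := hC _ (by positivity) _ hu
    _ = 2 * C / k := by rw [hsqrt]; field_simp
end
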